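/- Let n ≥ 2, r > 0, μ > 0, and let f : [0,r] → ℝ be a C² function with f(0) = 0, f > 0 on (0,r], f'(r) = 0, f' > 0 on [0,r), satisfying f''(t) + (n-1)·coth(t)·f'(t) + (μ - (n-1)/sinh²(t))·f(t) = 0 on (0,r], and lim_{t→0⁺}(f'(t) - coth(t)·f(t)) = 0. Then f'(t) - coth(t)·f(t) ≤ 0 for all t ∈ (0,r], and consequently the function t ↦ f(t)/sinh(t) is nonincreasing on (0,r]. -/

import Mathlib

open Set Filter Real Topology

/-!
With `γ = f' - coth · f` (`cothDefect f`), the second-order equation becomes the first-order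
one `γ' = -n coth · γ - (μ + n) f`, i.e. `(sinhⁿ γ)' = -(μ + n) sinhⁿ f < 0`. Hence `sinhⁿ γ`
decreases on `(0, r)` from the limit `0` at `0⁺`, so `γ ≤ 0` there; at `r`, `f'(r) = 0` gives
`γ(r) = -coth r · f(r) < 0`. Finally `(f / sinh)' = γ / sinh ≤ 0`.
-/

lemma AntitoneOn.le_of_tendsto_nhdsGT {β : Type*} [Preorder β] [TopologicalSpace β]
    [ClosedIciTopology β] {g : ℝ → β} {a b : ℝ} {c : β} (hg : AntitoneOn g (Ioo a b))
    (hlim : Tendsto g (𝓝[>] a) (𝓝 c)) {t : ℝ} (ht : t ∈ Ioo a b) : g t ≤ c :=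
  ge_of_tendsto hlim <| by
    filter_upwards [Ioo_mem_nhdsGT ht.1] with s hs
    exact hg ⟨hs.1, hs.2.trans ht.2⟩ ht hs.2.le

lemma hasDerivAt_cosh_div_sinh {t : ℝ} (ht : sinh t ≠ 0) :
    HasDerivAt (fun t => cosh t / sinh t) (-(sinh t ^ 2)⁻¹) t := by
  refine ((hasDerivAt_cosh t).div (hasDerivAt_sinh t) ht).congr_deriv ?_
  field_simp
  linear_combination -cosh_sq_sub_sinh_sq t

noncomputable def cothDefect (f : ℝ → ℝ) (t : ℝ) : ℝ :=
  deriv f t - cosh t / sinh t * f t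

section cothDefect

variable {f : ℝ → ℝ} {μ r t : ℝ}

lemma hasDerivAt_div_sinh {f' : ℝ} (hs : sinh t ≠ 0) (hf : HasDerivAt f f' t) :
    HasDerivAt (fun t => f t / sinh t) ((f' - cosh t / sinh t * f t) / sinh t) t := by
  refine (hf.div (hasDerivAt_sinh t) hs).congr_deriv ?_
  field_simp

lemma hasDerivAt_cothDefect {ν : ℝ} (hs : sinh t ≠ 0) (hf : DifferentiableAt ℝ f t)
    (hf' : DifferentiableAt ℝ (deriv f) t)
    (hode : deriv (deriv f) t + (ν - 1) * (cosh t / sinh t) * deriv f t +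
      (μ - (ν - 1) / sinh t ^ 2) * f t = 0) :
    HasDerivAt (cothDefect f)
      (-ν * (cosh t / sinh t) * cothDefect f t - (μ + ν) * f t) t := by
  refine (hf'.hasDerivAt.sub
    ((hasDerivAt_cosh_div_sinh hs).fun_mul hf.hasDerivAt)).congr_deriv ?_
  unfold cothDefect
  field_simp at hode ⊢
  linear_combination hode - ν * f t * cosh_sq_sub_sinh_sq t

lemma hasDerivAt_sinh_pow_mul_cothDefect {n : ℕ} (hs : sinh t ≠ 0)
    (hf : DifferentiableAt ℝ f t) (hf' : DifferentiableAt ℝ (deriv f) t)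
    (hode : deriv (deriv f) t + (n - 1 : ℝ) * (cosh t / sinh t) * deriv f t +
      (μ - (n - 1 : ℝ) / sinh t ^ 2) * f t = 0) :
    HasDerivAt (fun t => sinh t ^ n * cothDefect f t) (-(μ + n) * sinh t ^ n * f t) t := by
  refine (((hasDerivAt_sinh t).fun_pow n).fun_mul
    (hasDerivAt_cothDefect hs hf hf' hode)).congr_deriv ?_
  rcases n with _ | n
  · simp
  · simp only [Nat.add_sub_cancel, pow_succ]
    field_simp
    ring

lemma cothDefect_nonpos_of_ode {n : ℕ} (hμ : 0 < μ + n)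
    (hf : ∀ t ∈ Ioo 0 r, DifferentiableAt ℝ f t)
    (hf' : ∀ t ∈ Ioo 0 r, DifferentiableAt ℝ (deriv f) t)
    (hfpos : ∀ t ∈ Ioo 0 r, 0 < f t)
    (hode : ∀ t ∈ Ioo 0 r, deriv (deriv f) t + (n - 1 : ℝ) * (cosh t / sinh t) * deriv f t +
      (μ - (n - 1 : ℝ) / sinh t ^ 2) * f t = 0)
    (hlim : Tendsto (cothDefect f) (𝓝[>] 0) (𝓝 0)) (ht : t ∈ Ioo 0 r) :
    cothDefect f t ≤ 0 := by
  have hsinh {s : ℝ} (hs : s ∈ Ioo 0 r) : 0 < sinh s := sinh_pos_iff.2 hs.1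
  have hderiv {s : ℝ} (hs : s ∈ Ioo 0 r) := hasDerivAt_sinh_pow_mul_cothDefect
    (hsinh hs).ne' (hf s hs) (hf' s hs) (hode s hs)
  have hanti : AntitoneOn (fun s => sinh s ^ n * cothDefect f s) (Ioo 0 r) := by
    refine antitoneOn_of_hasDerivWithinAt_nonpos (convex_Ioo 0 r)
      (f' := fun s => -(μ + n) * sinh s ^ n * f s)
      (fun s hs => (hderiv hs).continuousAt.continuousWithinAt) ?_ ?_ <;>
    rw [interior_Ioo]
    · exact fun s hs => (hderiv hs).hasDerivWithinAt
    · intro s hs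
      have := mul_pos (mul_pos hμ (pow_pos (hsinh hs) n)) (hfpos s hs)
      linarith
  have hlim' : Tendsto (fun s => sinh s ^ n * cothDefect f s) (𝓝[>] 0) (𝓝 0) := by
    simpa using (((continuous_sinh.pow n).tendsto 0).mono_left nhdsWithin_le_nhds).mul hlim
  have hprod := hanti.le_of_tendsto_nhdsGT hlim' ht
  rw [mul_comm] at hprod
  exact nonpos_of_mul_nonpos_left hprod (pow_pos (hsinh ht) n)

lemma cothDefect_neg_of_deriv_eq_zero (ht : 0 < t) (hft : 0 < f t) (hf't : deriv f t = 0) :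
    cothDefect f t < 0 := by
  have := sinh_pos_iff.2 ht
  have := cosh_pos t
  rw [cothDefect, hf't, zero_sub, neg_lt_zero]
  positivity

lemma antitoneOn_div_sinh (hcont : ContinuousOn f (Ioc 0 r))
    (hf : ∀ t ∈ Ioo 0 r, DifferentiableAt ℝ f t)
    (hγ : ∀ t ∈ Ioo 0 r, cothDefect f t ≤ 0) :
    AntitoneOn (fun t => f t / sinh t) (Ioc 0 r) := by
  have hsinh {t : ℝ} (ht : t ∈ Ioc 0 r) : 0 < sinh t := sinh_pos_iff.2 ht.1
  refine antitoneOn_of_hasDerivWithinAt_nonpos (convex_Ioc 0 r)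
    (f' := fun t => cothDefect f t / sinh t)
    (hcont.div continuous_sinh.continuousOn fun t ht => (hsinh ht).ne') ?_ ?_ <;>
  rw [interior_Ioc]
  · exact fun t ht => (hasDerivAt_div_sinh (hsinh (Ioo_subset_Ioc_self ht)).ne'
      (hf t ht).hasDerivAt).hasDerivWithinAt
  · exact fun t ht => div_nonpos_of_nonpos_of_nonneg (hγ t ht)
      (hsinh (Ioo_subset_Ioc_self ht)).le

end cothDefect

theorem stmt_9_general (n : ℕ) (r μ : ℝ) (hμ : 0 < μ)
    (f : ℝ → ℝ) (hf : ContDiffOn ℝ 2 f (Icc 0 r))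
    (hfpos : ∀ t ∈ Ioc (0:ℝ) r, 0 < f t)
    (hfr : deriv f r = 0)
    (hode : ∀ t ∈ Ioc (0:ℝ) r,
      deriv (deriv f) t + (n - 1 : ℝ) * (Real.cosh t / Real.sinh t) * deriv f t +
        (μ - (n - 1 : ℝ) / Real.sinh t ^ 2) * f t = 0)
    (hlim : Tendsto (fun t => deriv f t - (Real.cosh t / Real.sinh t) * f t)
      (nhdsWithin 0 (Ioi 0)) (nhds 0)) :
    (∀ t ∈ Ioc (0:ℝ) r, deriv f t - (Real.cosh t / Real.sinh t) * f t ≤ 0) ∧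
      AntitoneOn (fun t => f t / Real.sinh t) (Ioc 0 r) := by
  have hcontDiffAt {t : ℝ} (ht : t ∈ Ioo 0 r) : ContDiffAt ℝ 2 f t :=
    hf.contDiffAt (Icc_mem_nhds ht.1 ht.2)
  have hdiff (t : ℝ) (ht : t ∈ Ioo 0 r) : DifferentiableAt ℝ f t :=
    (hcontDiffAt ht).differentiableAt (by norm_num)
  have hdiff' (t : ℝ) (ht : t ∈ Ioo 0 r) : DifferentiableAt ℝ (deriv f) t :=
    ((hcontDiffAt ht).derivWithin (m := 1) (by norm_num)).differentiableAt (by norm_num)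
  have hγ (t : ℝ) (ht : t ∈ Ioo 0 r) : cothDefect f t ≤ 0 :=
    cothDefect_nonpos_of_ode (by positivity) hdiff hdiff'
      (fun s hs => hfpos s (Ioo_subset_Ioc_self hs))
      (fun s hs => hode s (Ioo_subset_Ioc_self hs)) hlim ht
  refine ⟨fun t ht => ?_,
    antitoneOn_div_sinh (hf.continuousOn.mono Ioc_subset_Icc_self) hdiff hγ⟩
  rcases ht.2.lt_or_eq with htr | rfl
  · exact hγ t ⟨ht.1, htr⟩
  · exact (cothDefect_neg_of_deriv_eq_zero ht.1 (hfpos t ht) hfr).le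

theorem stmt_9 (n : ℕ) (hn : 2 ≤ n) (r μ : ℝ) (hr : 0 < r) (hμ : 0 < μ)
    (f : ℝ → ℝ) (hf : ContDiffOn ℝ 2 f (Icc 0 r))
    (hf0 : f 0 = 0)
    (hfpos : ∀ t ∈ Ioc (0:ℝ) r, 0 < f t)
    (hfr : deriv f r = 0)
    (hf'pos : ∀ t ∈ Ico (0:ℝ) r, 0 < deriv f t)
    (hode : ∀ t ∈ Ioc (0:ℝ) r,
      deriv (deriv f) t + (n - 1 : ℝ) * (Real.cosh t / Real.sinh t) * deriv f t +
        (μ - (n - 1 : ℝ) / Real.sinh t ^ 2) * f t = 0)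
    (hlim : Tendsto (fun t => deriv f t - (Real.cosh t / Real.sinh t) * f t)
      (nhdsWithin 0 (Ioi 0)) (nhds 0)) :
    (∀ t ∈ Ioc (0:ℝ) r, deriv f t - (Real.cosh t / Real.sinh t) * f t ≤ 0) ∧
      AntitoneOn (fun t => f t / Real.sinh t) (Ioc 0 r) :=
  stmt_9_general n r μ hμ f hf hfpos hfr hode hlim
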